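/- Let γ̂, λ > 0, β > 0, a > 0, ε ∈ ℝ, T > 0, R > 0, and let B̃, B̃′ : [0, T] → ℝ be continuous functions with ‖B̃‖_∞ ≤ R and ‖B̃′‖_∞ ≤ R. Define Φ(B̃)(t) = a − ∫ₜᵀ ( ε β B̃(s) − E^{B̃}(s) C^{B̃}(s) ) ds and similarly Φ(B̃′). Then ‖Φ(B̃) − Φ(B̃′)‖_∞ ≤ T ( |ε| β + 2 |ε| β (γ̂ R² T² / λ) ( 1 + γ̂ R² T² / λ ) ) ‖B̃ − B̃′‖_∞. -/

import Mathlib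

/-!
By variation of constants, the Riccati solution is `F = -∫ₜᵀ (γ̂/λ) B̃² exp(∫ₜˢ F)`, so `F ≤ 0`
and every weight `exp (∫ₜˢ F)` lies in `(0, 1]`. The difference `F - F'` solves the linear
equation `u' = (γ̂/λ)(B̃² - B̃'²) - (F + F') u`, `u T = 0`, whose coefficient `F + F'` is again
nonpositive; this gives `|F - F'| ≤ 2(γ̂/λ) R T ‖B̃ - B̃'‖`. As `exp` is 1-Lipschitz on `(-∞, 0]`,
`E` and `C` are then Lipschitz in `B̃` with explicit constants, and integrating the resulting
bound on the integrand of `Φ` over `[t, T]` produces the factor `T`.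
-/

open Set

noncomputable def supNorm (T : ℝ) (f : ℝ → ℝ) : ℝ :=
  sSup ((fun t => |f t|) '' Icc 0 T)

open MeasureTheory
open scoped Interval

lemma abs_mul_sub_mul_le (x x' y y' : ℝ) :
    |x * y - x' * y'| ≤ |x - x'| * |y| + |x'| * |y - y'| :=
  calc |x * y - x' * y'| = |(x - x') * y + x' * (y - y')| := by congr 1; ring
    _ ≤ |x - x'| * |y| + |x'| * |y - y'| := by
      rw [← abs_mul, ← abs_mul]; exact abs_add_le _ _

lemma abs_sq_sub_sq_le {x y R N : ℝ} (hx : |x| ≤ R) (hy : |y| ≤ R) (hxy : |x - y| ≤ N) :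
    |x ^ 2 - y ^ 2| ≤ 2 * R * N := by
  rw [sq_sub_sq, abs_mul]
  exact mul_le_mul (by linarith [abs_add_le x y]) hxy (abs_nonneg _)
    (by linarith [abs_nonneg x])

lemma Real.abs_exp_sub_exp_le_of_nonpos {x y : ℝ} (hx : x ≤ 0) (hy : y ≤ 0) :
    |Real.exp x - Real.exp y| ≤ |x - y| := by
  wlog hyx : y ≤ x generalizing x y
  · rw [abs_sub_comm, abs_sub_comm x]; exact this hy hx (le_of_not_ge hyx)
  have hexp : Real.exp y = Real.exp x * Real.exp (y - x) := by rw [← Real.exp_add]; ring_nf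
  rw [abs_of_nonneg (sub_nonneg.2 (Real.exp_le_exp.2 hyx)), abs_of_nonneg (sub_nonneg.2 hyx),
    hexp]
  nlinarith [Real.add_one_le_exp (y - x), Real.exp_le_one_iff.2 hx, Real.exp_pos x]

section Interval

variable {T : ℝ}

lemma supNorm_le (hT : 0 ≤ T) {f : ℝ → ℝ} {M : ℝ} (h : ∀ t ∈ Icc 0 T, |f t| ≤ M) :
    supNorm T f ≤ M :=
  csSup_le ((nonempty_Icc.2 hT).image _) (forall_mem_image.2 h)

lemma abs_le_supNorm {f : ℝ → ℝ} (hf : ContinuousOn f (Icc 0 T)) {t : ℝ}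
    (ht : t ∈ Icc 0 T) : |f t| ≤ supNorm T f :=
  le_csSup (isCompact_Icc.image_of_continuousOn hf.abs).bddAbove (mem_image_of_mem _ ht)

lemma intervalIntegrable_of_mem_Icc {f : ℝ → ℝ} (hf : ContinuousOn f (Icc 0 T)) {t s : ℝ}
    (ht : t ∈ Icc 0 T) (hs : s ∈ Icc 0 T) : IntervalIntegrable f volume t s :=
  (hf.mono (uIcc_subset_Icc ht hs)).intervalIntegrable

lemma abs_integral_le_mul_of_abs_le {f : ℝ → ℝ} {M t s : ℝ} (ht : t ∈ Icc 0 T)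
    (hs : s ∈ Icc t T) (h : ∀ r ∈ Icc t s, |f r| ≤ M) : |∫ r in t..s, f r| ≤ M * T := by
  have hM : 0 ≤ M := (abs_nonneg _).trans (h t ⟨le_rfl, hs.1⟩)
  calc |∫ r in t..s, f r| ≤ M * |s - t| :=
        intervalIntegral.norm_integral_le_of_norm_le_const (f := f) fun r hr =>
          h r (Ioc_subset_Icc_self (uIoc_of_le hs.1 ▸ hr))
    _ ≤ M * T := by
      rw [abs_of_nonneg (sub_nonneg.2 hs.1)]
      gcongr
      linarith [ht.1, hs.2]

lemma integral_nonpos_of_nonpos {p : ℝ → ℝ} {t s : ℝ} (hts : t ≤ s)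
    (hp : ∀ r ∈ Icc t s, p r ≤ 0) : ∫ r in t..s, p r ≤ 0 := by
  have h := intervalIntegral.integral_nonneg (μ := volume) hts fun r hr =>
    neg_nonneg.2 (hp r hr)
  rw [intervalIntegral.integral_neg] at h
  linarith

lemma continuousOn_exp_integral {p : ℝ → ℝ} (hp : ContinuousOn p (Icc 0 T)) {t : ℝ}
    (ht : t ∈ Icc 0 T) : ContinuousOn (fun s => Real.exp (∫ r in t..s, p r)) (Icc t T) := by
  refine Real.continuous_exp.comp_continuousOn ?_
  rw [← uIcc_of_le ht.2]
  exact intervalIntegral.continuousOn_primitive_interval'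
    (intervalIntegrable_of_mem_Icc hp ht ⟨ht.1.trans ht.2, le_rfl⟩) left_mem_uIcc

lemma hasDerivAt_of_eq_neg_integral {g u : ℝ → ℝ} (hg : ContinuousOn g (Icc 0 T))
    (hu : ∀ t ∈ Icc 0 T, u t = -∫ s in t..T, g s) {t : ℝ} (ht : t ∈ Ioo 0 T) :
    HasDerivAt u (g t) t := by
  have hint : HasDerivAt (fun x => ∫ s in x..T, g s) (-g t) t :=
    intervalIntegral.integral_hasDerivAt_left
      (intervalIntegrable_of_mem_Icc hg (Ioo_subset_Icc_self ht)
        ⟨(ht.1.trans ht.2).le, le_rfl⟩)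
      ((hg.mono Ioo_subset_Icc_self).stronglyMeasurableAtFilter isOpen_Ioo t ht)
      (hg.continuousAt (Icc_mem_nhds ht.1 ht.2))
  rw [← neg_neg (g t)]
  exact hint.neg.congr_of_eventuallyEq
    (Filter.eventually_of_mem (Icc_mem_nhds ht.1 ht.2) hu)

end Interval

/-- `E^{B̃}` and `C^{B̃}` are constant multiples of `weightedTail F^{B̃} q T` for `q = B̃`, `B̃²`. -/
noncomputable def weightedTail (p q : ℝ → ℝ) (T t : ℝ) : ℝ :=
  ∫ s in t..T, q s * Real.exp (∫ r in t..s, p r)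

section WeightedTail

variable {T : ℝ} {p p' q q' u : ℝ → ℝ} {t : ℝ}

/-- Variation of constants: `d/ds (u s * exp (∫ₜˢ p)) = q s * exp (∫ₜˢ p)`. -/
theorem eq_neg_weightedTail (hp : ContinuousOn p (Icc 0 T))
    (hq : ContinuousOn q (Icc 0 T)) (hu : ContinuousOn u (Icc 0 T))
    (hsol : ∀ t ∈ Icc 0 T, u t = -∫ s in t..T, (q s - p s * u s)) (ht : t ∈ Icc 0 T) :
    u t = -weightedTail p q T t := by
  have hT : T ∈ Icc 0 T := ⟨ht.1.trans ht.2, le_rfl⟩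
  have hsub : Icc t T ⊆ Icc 0 T := Icc_subset_Icc ht.1 le_rfl
  set P : ℝ → ℝ := fun s => ∫ r in t..s, p r
  have hP : ContinuousOn (fun s => Real.exp (P s)) (Icc t T) := continuousOn_exp_integral hp ht
  have hderiv : ∀ s ∈ Ioo t T,
      HasDerivAt (fun s => u s * Real.exp (P s)) (q s * Real.exp (P s)) s := by
    intro s hs
    have hs0 : s ∈ Ioo 0 T := ⟨ht.1.trans_lt hs.1, hs.2⟩
    have hu' : HasDerivAt u (q s - p s * u s) s :=
      hasDerivAt_of_eq_neg_integral (hq.sub (hp.mul hu)) hsol hs0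
    have hP' : HasDerivAt P (p s) s :=
      intervalIntegral.integral_hasDerivAt_right
        (intervalIntegrable_of_mem_Icc hp ht (Ioo_subset_Icc_self hs0))
        ((hp.mono Ioo_subset_Icc_self).stronglyMeasurableAtFilter isOpen_Ioo s hs0)
        (hp.continuousAt (Icc_mem_nhds hs0.1 hs0.2))
    exact (hu'.fun_mul hP'.exp).congr_deriv (by ring)
  have hftc := intervalIntegral.integral_eq_sub_of_hasDeriv_right_of_le
    (f := fun s => u s * Real.exp (P s)) ht.2 ((hu.mono hsub).mul hP)
    (fun s hs => (hderiv s hs).hasDerivWithinAt)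
    (((hq.mono hsub).mul hP).intervalIntegrable_of_Icc ht.2)
  have huT : u T = 0 := by simpa using hsol T hT
  simp only [huT, zero_mul, zero_sub, P, intervalIntegral.integral_same, Real.exp_zero,
    mul_one] at hftc
  rw [weightedTail, hftc, neg_neg]

lemma continuousOn_weightedTail (hT : 0 ≤ T) (hp : ContinuousOn p (Icc 0 T))
    (hq : ContinuousOn q (Icc 0 T)) : ContinuousOn (weightedTail p q T) (Icc 0 T) := by
  set P : ℝ → ℝ := fun s => ∫ r in (0 : ℝ)..s, p r
  have hP : ContinuousOn P (Icc 0 T) := by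
    rw [← uIcc_of_le hT]
    exact intervalIntegral.continuousOn_primitive_interval'
      (hp.intervalIntegrable_of_Icc hT) left_mem_uIcc
  have hqP : ContinuousOn (fun s => q s * Real.exp (P s)) (Icc 0 T) :=
    hq.mul (Real.continuous_exp.comp_continuousOn hP)
  have htail : ContinuousOn (fun t => ∫ s in t..T, q s * Real.exp (P s)) (Icc 0 T) := by
    rw [← uIcc_of_le hT]
    exact intervalIntegral.continuousOn_primitive_interval_left
      (by rw [uIcc_of_le hT]; exact hqP.integrableOn_Icc)
  -- `exp (∫ₜˢ p) = exp (-P t) * exp (P s)` separates the variables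
  refine ContinuousOn.congr
    (f := fun t => Real.exp (-P t) * ∫ s in t..T, q s * Real.exp (P s))
    ((Real.continuous_exp.comp_continuousOn hP.neg).mul htail) fun t ht => ?_
  beta_reduce
  rw [weightedTail, ← intervalIntegral.integral_const_mul]
  refine intervalIntegral.integral_congr fun s hs => ?_
  have hs' : s ∈ Icc 0 T := uIcc_subset_Icc ht ⟨hT, le_rfl⟩ hs
  have hsplit : ∫ r in t..s, p r = P s - P t := by
    rw [intervalIntegral.integral_interval_sub_left
      (intervalIntegrable_of_mem_Icc hp ⟨le_rfl, hT⟩ hs')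
      (intervalIntegrable_of_mem_Icc hp ⟨le_rfl, hT⟩ ht)]
  simp only [hsplit, Real.exp_sub, Real.exp_neg]
  ring

lemma exp_integral_le_one (hp : ∀ s ∈ Icc 0 T, p s ≤ 0) (ht : t ∈ Icc 0 T) {s : ℝ}
    (hs : s ∈ Icc t T) : Real.exp (∫ r in t..s, p r) ≤ 1 :=
  Real.exp_le_one_iff.2 <| integral_nonpos_of_nonpos hs.1 fun r hr =>
    hp r ⟨ht.1.trans hr.1, hr.2.trans hs.2⟩

lemma abs_weightedTail_le {M : ℝ} (hp : ∀ s ∈ Icc 0 T, p s ≤ 0)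
    (hq : ∀ s ∈ Icc 0 T, |q s| ≤ M) (ht : t ∈ Icc 0 T) : |weightedTail p q T t| ≤ M * T := by
  refine abs_integral_le_mul_of_abs_le ht ⟨ht.2, le_rfl⟩ fun s hs => ?_
  have hqs := hq s ⟨ht.1.trans hs.1, hs.2⟩
  rw [abs_mul, Real.abs_exp, ← mul_one M]
  exact mul_le_mul hqs (exp_integral_le_one hp ht hs) (Real.exp_pos _).le
    ((abs_nonneg _).trans hqs)

lemma abs_weightedTail_sub_le {M δ η : ℝ} (hp : ContinuousOn p (Icc 0 T))
    (hp' : ContinuousOn p' (Icc 0 T)) (hq : ContinuousOn q (Icc 0 T))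
    (hq' : ContinuousOn q' (Icc 0 T)) (hp0 : ∀ s ∈ Icc 0 T, p s ≤ 0)
    (hp'0 : ∀ s ∈ Icc 0 T, p' s ≤ 0) (hq'M : ∀ s ∈ Icc 0 T, |q' s| ≤ M)
    (hdq : ∀ s ∈ Icc 0 T, |q s - q' s| ≤ δ) (hdp : ∀ s ∈ Icc 0 T, |p s - p' s| ≤ η)
    (ht : t ∈ Icc 0 T) :
    |weightedTail p q T t - weightedTail p' q' T t| ≤ (δ + M * (η * T)) * T := by
  have hsub : Icc t T ⊆ Icc 0 T := Icc_subset_Icc ht.1 le_rfl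
  rw [weightedTail, weightedTail, ← intervalIntegral.integral_sub
    (f := fun s => q s * Real.exp (∫ r in t..s, p r))
    (g := fun s => q' s * Real.exp (∫ r in t..s, p' r))
    (((hq.mono hsub).mul (continuousOn_exp_integral hp ht)).intervalIntegrable_of_Icc ht.2)
    (((hq'.mono hsub).mul (continuousOn_exp_integral hp' ht)).intervalIntegrable_of_Icc ht.2)]
  refine abs_integral_le_mul_of_abs_le ht ⟨ht.2, le_rfl⟩ fun s hs => ?_
  have hs0 : s ∈ Icc 0 T := hsub hs
  have hexp : |Real.exp (∫ r in t..s, p r) - Real.exp (∫ r in t..s, p' r)| ≤ η * T := by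
    refine (Real.abs_exp_sub_exp_le_of_nonpos
      (integral_nonpos_of_nonpos hs.1 fun r hr => hp0 r (hsub ⟨hr.1, hr.2.trans hs.2⟩))
      (integral_nonpos_of_nonpos hs.1 fun r hr =>
        hp'0 r (hsub ⟨hr.1, hr.2.trans hs.2⟩))).trans ?_
    rw [← intervalIntegral.integral_sub (intervalIntegrable_of_mem_Icc hp ht hs0)
      (intervalIntegrable_of_mem_Icc hp' ht hs0)]
    exact abs_integral_le_mul_of_abs_le ht hs fun r hr => hdp r (hsub ⟨hr.1, hr.2.trans hs.2⟩)
  have hdqs := hdq s hs0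
  have hq's := hq'M s hs0
  calc _ ≤ |q s - q' s| * |Real.exp (∫ r in t..s, p r)| +
        |q' s| * |Real.exp (∫ r in t..s, p r) - Real.exp (∫ r in t..s, p' r)| :=
        abs_mul_sub_mul_le _ _ _ _
    _ ≤ δ * 1 + M * (η * T) := by
      rw [Real.abs_exp]
      gcongr
      · exact (abs_nonneg _).trans hdqs
      · exact exp_integral_le_one hp0 ht hs
      · exact (abs_nonneg _).trans hq's
    _ = δ + M * (η * T) := by rw [mul_one]

end WeightedTail

section Riccati

variable {T c R N : ℝ} {B B' F F' : ℝ → ℝ} {t : ℝ}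

lemma riccati_eq_neg_weightedTail (hB : ContinuousOn B (Icc 0 T))
    (hF : ContinuousOn F (Icc 0 T))
    (hsol : ∀ t ∈ Icc 0 T, F t = -∫ s in t..T, (c * B s ^ 2 - F s ^ 2)) (ht : t ∈ Icc 0 T) :
    F t = -weightedTail F (fun s => c * B s ^ 2) T t :=
  eq_neg_weightedTail (q := fun s => c * B s ^ 2) hF (continuousOn_const.mul (hB.pow 2)) hF
    (by simpa only [← sq] using hsol) ht

lemma riccati_nonpos (hc : 0 ≤ c) (hB : ContinuousOn B (Icc 0 T))
    (hF : ContinuousOn F (Icc 0 T))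
    (hsol : ∀ t ∈ Icc 0 T, F t = -∫ s in t..T, (c * B s ^ 2 - F s ^ 2)) (ht : t ∈ Icc 0 T) :
    F t ≤ 0 := by
  rw [riccati_eq_neg_weightedTail hB hF hsol ht, neg_nonpos]
  exact intervalIntegral.integral_nonneg ht.2 fun s _ => by positivity

lemma riccati_sub_eq_neg_weightedTail (hB : ContinuousOn B (Icc 0 T))
    (hB' : ContinuousOn B' (Icc 0 T)) (hF : ContinuousOn F (Icc 0 T))
    (hF' : ContinuousOn F' (Icc 0 T))
    (hsol : ∀ t ∈ Icc 0 T, F t = -∫ s in t..T, (c * B s ^ 2 - F s ^ 2))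
    (hsol' : ∀ t ∈ Icc 0 T, F' t = -∫ s in t..T, (c * B' s ^ 2 - F' s ^ 2))
    (ht : t ∈ Icc 0 T) :
    F t - F' t =
      -weightedTail (fun s => F s + F' s) (fun s => c * (B s ^ 2 - B' s ^ 2)) T t := by
  refine eq_neg_weightedTail (p := fun s => F s + F' s)
    (q := fun s => c * (B s ^ 2 - B' s ^ 2)) (u := fun s => F s - F' s) (hF.add hF')
    (continuousOn_const.mul ((hB.pow 2).sub (hB'.pow 2))) (hF.sub hF') (fun t ht => ?_) ht
  have hT : T ∈ Icc 0 T := ⟨ht.1.trans ht.2, le_rfl⟩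
  have hg : ContinuousOn (fun s => c * B s ^ 2 - F s ^ 2) (Icc 0 T) :=
    (continuousOn_const.mul (hB.pow 2)).sub (hF.pow 2)
  have hg' : ContinuousOn (fun s => c * B' s ^ 2 - F' s ^ 2) (Icc 0 T) :=
    (continuousOn_const.mul (hB'.pow 2)).sub (hF'.pow 2)
  rw [hsol t ht, hsol' t ht, neg_sub_neg, ← intervalIntegral.integral_sub
    (intervalIntegrable_of_mem_Icc hg' ht hT) (intervalIntegrable_of_mem_Icc hg ht hT),
    ← intervalIntegral.integral_neg]
  exact intervalIntegral.integral_congr fun s _ => by ring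

lemma abs_riccati_sub_le (hc : 0 ≤ c) (hB : ContinuousOn B (Icc 0 T))
    (hB' : ContinuousOn B' (Icc 0 T)) (hF : ContinuousOn F (Icc 0 T))
    (hF' : ContinuousOn F' (Icc 0 T))
    (hsol : ∀ t ∈ Icc 0 T, F t = -∫ s in t..T, (c * B s ^ 2 - F s ^ 2))
    (hsol' : ∀ t ∈ Icc 0 T, F' t = -∫ s in t..T, (c * B' s ^ 2 - F' s ^ 2))
    (hBR : ∀ s ∈ Icc 0 T, |B s| ≤ R) (hB'R : ∀ s ∈ Icc 0 T, |B' s| ≤ R)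
    (hN : ∀ s ∈ Icc 0 T, |B s - B' s| ≤ N) (ht : t ∈ Icc 0 T) :
    |F t - F' t| ≤ c * (2 * R * N) * T := by
  rw [riccati_sub_eq_neg_weightedTail hB hB' hF hF' hsol hsol' ht, abs_neg]
  refine abs_weightedTail_le (fun s hs => ?_) (fun s hs => ?_) ht
  · linarith [riccati_nonpos hc hB hF hsol hs, riccati_nonpos hc hB' hF' hsol' hs]
  · rw [abs_mul, abs_of_nonneg hc]
    exact mul_le_mul_of_nonneg_left (abs_sq_sub_sq_le (hBR s hs) (hB'R s hs) (hN s hs)) hc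

theorem abs_weightedTail_mul_sub_le (hc : 0 ≤ c) (hB : ContinuousOn B (Icc 0 T))
    (hB' : ContinuousOn B' (Icc 0 T)) (hF : ContinuousOn F (Icc 0 T))
    (hF' : ContinuousOn F' (Icc 0 T))
    (hsol : ∀ t ∈ Icc 0 T, F t = -∫ s in t..T, (c * B s ^ 2 - F s ^ 2))
    (hsol' : ∀ t ∈ Icc 0 T, F' t = -∫ s in t..T, (c * B' s ^ 2 - F' s ^ 2))
    (hBR : ∀ s ∈ Icc 0 T, |B s| ≤ R) (hB'R : ∀ s ∈ Icc 0 T, |B' s| ≤ R)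
    (hN : ∀ s ∈ Icc 0 T, |B s - B' s| ≤ N) (ht : t ∈ Icc 0 T) :
    |weightedTail F B T t * weightedTail F (fun s => B s ^ 2) T t -
        weightedTail F' B' T t * weightedTail F' (fun s => B' s ^ 2) T t| ≤
      R ^ 2 * T ^ 2 * N * (3 + 4 * c * R ^ 2 * T ^ 2) := by
  have hF0 : ∀ s ∈ Icc 0 T, F s ≤ 0 := fun s hs => riccati_nonpos hc hB hF hsol hs
  have hF'0 : ∀ s ∈ Icc 0 T, F' s ≤ 0 := fun s hs => riccati_nonpos hc hB' hF' hsol' hs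
  have hdF : ∀ s ∈ Icc 0 T, |F s - F' s| ≤ c * (2 * R * N) * T := fun s hs =>
    abs_riccati_sub_le hc hB hB' hF hF' hsol hsol' hBR hB'R hN hs
  have hsq : ∀ s ∈ Icc 0 T, |B s ^ 2| ≤ R ^ 2 := fun s hs => by
    rw [abs_pow]; exact pow_le_pow_left₀ (abs_nonneg _) (hBR s hs) 2
  have hsq' : ∀ s ∈ Icc 0 T, |B' s ^ 2| ≤ R ^ 2 := fun s hs => by
    rw [abs_pow]; exact pow_le_pow_left₀ (abs_nonneg _) (hB'R s hs) 2
  have hd1 := abs_weightedTail_sub_le hF hF' hB hB' hF0 hF'0 hB'R hN hdF ht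
  have hd2 := abs_weightedTail_sub_le hF hF' (hB.pow 2) (hB'.pow 2) hF0 hF'0 hsq' (fun s hs =>
    abs_sq_sub_sq_le (hBR s hs) (hB'R s hs) (hN s hs)) hdF ht
  have h1 := abs_weightedTail_le hF0 hsq ht
  have h2 := abs_weightedTail_le hF'0 hB'R ht
  calc _ ≤ _ := abs_mul_sub_mul_le _ _ _ _
    _ ≤ (N + R * (c * (2 * R * N) * T * T)) * T * (R ^ 2 * T) +
          R * T * ((2 * R * N + R ^ 2 * (c * (2 * R * N) * T * T)) * T) :=
        add_le_add (mul_le_mul hd1 h1 (abs_nonneg _) ((abs_nonneg _).trans hd1))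
          (mul_le_mul h2 hd2 (abs_nonneg _) ((abs_nonneg _).trans h2))
    _ = R ^ 2 * T ^ 2 * N * (3 + 4 * c * R ^ 2 * T ^ 2) := by ring

end Riccati

/-- The integrand `εβB̃ - E^{B̃} C^{B̃}` of `Φ(B̃)`, with `F = F^{B̃}`. -/
noncomputable def picardIntegrand (γhat lam β ε T : ℝ) (B F : ℝ → ℝ) (s : ℝ) : ℝ :=
  ε * β * B s - -(γhat * β / lam) * weightedTail F B T s *
    (-(ε / 2) * weightedTail F (fun r => B r ^ 2) T s)

section Picard

variable {γhat lam β ε T R N : ℝ} {B B' F F' : ℝ → ℝ}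

lemma continuousOn_picardIntegrand (hT : 0 ≤ T) (hB : ContinuousOn B (Icc 0 T))
    (hF : ContinuousOn F (Icc 0 T)) :
    ContinuousOn (picardIntegrand γhat lam β ε T B F) (Icc 0 T) :=
  (continuousOn_const.mul hB).sub
    ((continuousOn_const.mul (continuousOn_weightedTail hT hF hB)).mul
      (continuousOn_const.mul (continuousOn_weightedTail hT hF (hB.pow 2))))

lemma abs_picardIntegrand_sub_le (hγ : 0 ≤ γhat) (hlam : 0 ≤ lam) (hβ : 0 ≤ β)
    (hB : ContinuousOn B (Icc 0 T)) (hB' : ContinuousOn B' (Icc 0 T))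
    (hF : ContinuousOn F (Icc 0 T)) (hF' : ContinuousOn F' (Icc 0 T))
    (hsol : ∀ t ∈ Icc 0 T, F t = -∫ s in t..T, (γhat / lam * B s ^ 2 - F s ^ 2))
    (hsol' : ∀ t ∈ Icc 0 T, F' t = -∫ s in t..T, (γhat / lam * B' s ^ 2 - F' s ^ 2))
    (hBR : ∀ s ∈ Icc 0 T, |B s| ≤ R) (hB'R : ∀ s ∈ Icc 0 T, |B' s| ≤ R)
    (hN : ∀ s ∈ Icc 0 T, |B s - B' s| ≤ N) {s : ℝ} (hs : s ∈ Icc 0 T) :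
    |picardIntegrand γhat lam β ε T B' F' s - picardIntegrand γhat lam β ε T B F s| ≤
      (|ε| * β + 2 * |ε| * β * (γhat * R ^ 2 * T ^ 2 / lam) *
        (1 + γhat * R ^ 2 * T ^ 2 / lam)) * N := by
  have hN0 : 0 ≤ N := (abs_nonneg _).trans (hN s hs)
  calc _ = |ε * β * (B' s - B s) + γhat * β / lam * (ε / 2) *
        (weightedTail F B T s * weightedTail F (fun r => B r ^ 2) T s -
          weightedTail F' B' T s * weightedTail F' (fun r => B' r ^ 2) T s)| := by
        rw [picardIntegrand, picardIntegrand]; congr 1; ring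
    _ ≤ |ε| * β * N + γhat * β / lam * (|ε| / 2) *
        (R ^ 2 * T ^ 2 * N * (3 + 4 * (γhat / lam) * R ^ 2 * T ^ 2)) := by
      refine (abs_add_le _ _).trans (add_le_add ?_ ?_)
      · rw [abs_mul, abs_mul, abs_of_nonneg hβ, abs_sub_comm]
        exact mul_le_mul_of_nonneg_left (hN s hs) (by positivity)
      · rw [abs_mul, abs_mul (γhat * β / lam), abs_div ε, abs_two,
          abs_of_nonneg (by positivity : 0 ≤ γhat * β / lam)]
        exact mul_le_mul_of_nonneg_left (abs_weightedTail_mul_sub_le (by positivity) hB hB' hF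
          hF' hsol hsol' hBR hB'R hN hs) (by positivity)
    _ ≤ _ := by
      -- the stated constant leaves a slack of `|ε| β N (γ̂R²T²/λ) / 2`
      have hslack : 0 ≤ |ε| * β * N * (γhat * R ^ 2 * T ^ 2 / lam) / 2 := by positivity
      have hgap : (|ε| * β + 2 * |ε| * β * (γhat * R ^ 2 * T ^ 2 / lam) *
          (1 + γhat * R ^ 2 * T ^ 2 / lam)) * N - (|ε| * β * N + γhat * β / lam * (|ε| / 2) *
          (R ^ 2 * T ^ 2 * N * (3 + 4 * (γhat / lam) * R ^ 2 * T ^ 2))) =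
          |ε| * β * N * (γhat * R ^ 2 * T ^ 2 / lam) / 2 := by
        field_simp; ring
      linarith

end Picard

theorem Phi_contraction_general
    (γhat lam β a ε T R : ℝ)
    (hγ : 0 < γhat) (hlam : 0 < lam) (hβ : 0 < β) (hT : 0 < T)
    (Btil Btil' : ℝ → ℝ)
    (hB : ContinuousOn Btil (Icc 0 T)) (hB' : ContinuousOn Btil' (Icc 0 T))
    (hBR : supNorm T Btil ≤ R) (hB'R : supNorm T Btil' ≤ R)
    (F F' : ℝ → ℝ)
    (hFcont : ContinuousOn F (Icc 0 T)) (hF'cont : ContinuousOn F' (Icc 0 T))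
    (hFsol : ∀ t ∈ Icc (0:ℝ) T, F t = -∫ s in t..T, (γhat / lam * Btil s ^ 2 - F s ^ 2))
    (hF'sol : ∀ t ∈ Icc (0:ℝ) T, F' t = -∫ s in t..T, (γhat / lam * Btil' s ^ 2 - F' s ^ 2))
    (E E' C C' Phi Phi' : ℝ → ℝ)
    (hE : E = fun t => -(γhat * β / lam) * ∫ s in t..T, Btil s * Real.exp (∫ r in t..s, F r))
    (hE' : E' = fun t => -(γhat * β / lam) *
      ∫ s in t..T, Btil' s * Real.exp (∫ r in t..s, F' r))
    (hC : C = fun t => -(ε / 2) * ∫ s in t..T, Btil s ^ 2 * Real.exp (∫ r in t..s, F r))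
    (hC' : C' = fun t => -(ε / 2) * ∫ s in t..T, Btil' s ^ 2 * Real.exp (∫ r in t..s, F' r))
    (hPhi : Phi = fun t => a - ∫ s in t..T, (ε * β * Btil s - E s * C s))
    (hPhi' : Phi' = fun t => a - ∫ s in t..T, (ε * β * Btil' s - E' s * C' s)) :
    supNorm T (fun t => Phi t - Phi' t) ≤
      T * (|ε| * β + 2 * |ε| * β * (γhat * R ^ 2 * T ^ 2 / lam) *
        (1 + γhat * R ^ 2 * T ^ 2 / lam)) * supNorm T (fun u => Btil u - Btil' u) := by
  set N := supNorm T (fun u => Btil u - Btil' u)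
  have hBR : ∀ s ∈ Icc 0 T, |Btil s| ≤ R := fun s hs => (abs_le_supNorm hB hs).trans hBR
  have hB'R : ∀ s ∈ Icc 0 T, |Btil' s| ≤ R := fun s hs => (abs_le_supNorm hB' hs).trans hB'R
  have hN : ∀ s ∈ Icc 0 T, |Btil s - Btil' s| ≤ N := fun s hs =>
    abs_le_supNorm (hB.sub hB') hs
  obtain rfl : Phi = fun t => a - ∫ s in t..T, picardIntegrand γhat lam β ε T Btil F s := by
    subst hPhi hE hC; rfl
  obtain rfl : Phi' = fun t => a - ∫ s in t..T, picardIntegrand γhat lam β ε T Btil' F' s := by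
    subst hPhi' hE' hC'; rfl
  refine supNorm_le hT.le fun t ht => ?_
  have hT' : T ∈ Icc 0 T := ⟨hT.le, le_rfl⟩
  rw [sub_sub_sub_cancel_left, ← intervalIntegral.integral_sub
    (intervalIntegrable_of_mem_Icc (continuousOn_picardIntegrand hT.le hB' hF'cont) ht hT')
    (intervalIntegrable_of_mem_Icc (continuousOn_picardIntegrand hT.le hB hFcont) ht hT')]
  calc _ ≤ (|ε| * β + 2 * |ε| * β * (γhat * R ^ 2 * T ^ 2 / lam) *
          (1 + γhat * R ^ 2 * T ^ 2 / lam)) * N * T :=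
        abs_integral_le_mul_of_abs_le ht ⟨ht.2, le_rfl⟩ fun s hs =>
          abs_picardIntegrand_sub_le hγ.le hlam.le hβ.le hB hB' hFcont hF'cont hFsol hF'sol
            hBR hB'R hN ⟨ht.1.trans hs.1, hs.2⟩
    _ = _ := by ring

/-- Contraction estimate for the Picard map
`Φ(B̃)(t) = a − ∫ₜᵀ (εβ B̃(s) − E^{B̃}(s)C^{B̃}(s)) ds`: if `‖B̃‖_∞ ≤ R` and `‖B̃′‖_∞ ≤ R`, then
`‖Φ(B̃) − Φ(B̃′)‖_∞ ≤ T(|ε|β + 2|ε|β(γ̂R²T²/λ)(1 + γ̂R²T²/λ))‖B̃ − B̃′‖_∞`. -/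
theorem Phi_contraction
    (γhat lam β a ε T R : ℝ)
    (hγ : 0 < γhat) (hlam : 0 < lam) (hβ : 0 < β) (ha : 0 < a) (hT : 0 < T) (hR : 0 < R)
    (Btil Btil' : ℝ → ℝ)
    (hB : ContinuousOn Btil (Icc 0 T)) (hB' : ContinuousOn Btil' (Icc 0 T))
    (hBR : supNorm T Btil ≤ R) (hB'R : supNorm T Btil' ≤ R)
    (F F' : ℝ → ℝ)
    (hFcont : ContinuousOn F (Icc 0 T)) (hF'cont : ContinuousOn F' (Icc 0 T))
    (hFsol : ∀ t ∈ Icc (0:ℝ) T, F t = -∫ s in t..T, (γhat / lam * Btil s ^ 2 - F s ^ 2))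
    (hF'sol : ∀ t ∈ Icc (0:ℝ) T, F' t = -∫ s in t..T, (γhat / lam * Btil' s ^ 2 - F' s ^ 2))
    (E E' C C' Phi Phi' : ℝ → ℝ)
    (hE : E = fun t => -(γhat * β / lam) * ∫ s in t..T, Btil s * Real.exp (∫ r in t..s, F r))
    (hE' : E' = fun t => -(γhat * β / lam) *
      ∫ s in t..T, Btil' s * Real.exp (∫ r in t..s, F' r))
    (hC : C = fun t => -(ε / 2) * ∫ s in t..T, Btil s ^ 2 * Real.exp (∫ r in t..s, F r))
    (hC' : C' = fun t => -(ε / 2) * ∫ s in t..T, Btil' s ^ 2 * Real.exp (∫ r in t..s, F' r))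
    (hPhi : Phi = fun t => a - ∫ s in t..T, (ε * β * Btil s - E s * C s))
    (hPhi' : Phi' = fun t => a - ∫ s in t..T, (ε * β * Btil' s - E' s * C' s)) :
    supNorm T (fun t => Phi t - Phi' t) ≤
      T * (|ε| * β + 2 * |ε| * β * (γhat * R ^ 2 * T ^ 2 / lam) *
        (1 + γhat * R ^ 2 * T ^ 2 / lam)) * supNorm T (fun u => Btil u - Btil' u) :=
  Phi_contraction_general γhat lam β a ε T R hγ hlam hβ hT Btil Btil' hB hB' hBR hB'R F F' hFcont
    hF'cont hFsol hF'sol E E' C C' Phi Phi' hE hE' hC hC' hPhi hPhi'
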